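/- arXiv:2205.04207 — 3 statements merged into one kernel-verified Lean document; each statement's English description precedes it below -/
import Mathlib

section
/- Let U be a set, f : U → U (partially defined), and N^{cu} a family of normed spaces over U with linear maps P^1_x : N^{cu}_x → N^{cu}_{f(x)}. Suppose there is A₀ > 0 with |log‖(P^1 | N^{cu}_{f^i x})^{-1}‖| ≤ A₀ for all i, and for some c₀ > 0, limsup_{n→∞} (1/n)∑_{i=0}^{n-1} log‖(P^1 | N^{cu}_{f^i x})^{-1}‖ < −c₀. Then for every N large enough there exist ℓ > ζN hyperbolic times 1 < n₁ < … < n_ℓ ≤ N, ζ = c₀/(4A₀ − c₀), such that ∏_{j=n}^{n_i − 1} ‖(P^1 | N^{cu}_{f^j x})^{-1}‖ ≤ e^{−c₀(n_i − n)/4} for all 0 ≤ n < n_i and each i. -/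
/-!
Put `bᵢ = log pᵢ + c₀/4 ≥ -(A₀ - c₀/4)` and call `t` a hyperbolic time when every block sum
`∑_{s ≤ i < t} bᵢ` is nonpositive; exponentiating gives the required product bound at `t`.
Pliss' lemma says the partial sums `∑_{i < n} bᵢ` are bounded below by `-(A₀ - c₀/4)` times the
number of hyperbolic times in `[1, n]`. Non-uniform expansion makes `∑_{i < N} bᵢ < -(3c₀/4) N`
for large `N`, so there are more than `3ζN` hyperbolic times in `[1, N]`, and more than `ζN` of
them exceed `1` as soon as `2ζN ≥ 1`.
-/

open Filter Finset

section Pliss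

variable (b : ℕ → ℝ)

def IsHyperbolicTime (t : ℕ) : Prop :=
  ∀ s < t, ∑ i ∈ range t, b i ≤ ∑ i ∈ range s, b i

open scoped Classical in
noncomputable def hyperbolicTimes (n : ℕ) : Finset ℕ :=
  (Icc 1 n).filter (IsHyperbolicTime b)

variable {b}

theorem mem_hyperbolicTimes {n t : ℕ} :
    t ∈ hyperbolicTimes b n ↔ (1 ≤ t ∧ t ≤ n) ∧ IsHyperbolicTime b t := by
  simp [hyperbolicTimes]

theorem hyperbolicTimes_mono : Monotone (hyperbolicTimes b) := fun _ _ hmn _ ht => by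
  rw [mem_hyperbolicTimes] at ht ⊢
  exact ⟨⟨ht.1.1, ht.1.2.trans hmn⟩, ht.2⟩

theorem hyperbolicTimes_succ {n : ℕ} (h : IsHyperbolicTime b (n + 1)) :
    hyperbolicTimes b (n + 1) = insert (n + 1) (hyperbolicTimes b n) := by
  ext t
  simp only [mem_insert, mem_hyperbolicTimes]
  constructor
  · rintro ⟨⟨h1, h2⟩, ht⟩
    rcases Nat.lt_or_eq_of_le h2 with h2 | rfl
    · exact Or.inr ⟨⟨h1, by omega⟩, ht⟩
    · exact Or.inl rfl
  · rintro (rfl | ⟨⟨h1, h2⟩, ht⟩)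
    · exact ⟨⟨by omega, le_rfl⟩, h⟩
    · exact ⟨⟨h1, by omega⟩, ht⟩

/-- Pliss' lemma. At a time that is not hyperbolic the partial sum exceeds an earlier one; at a
hyperbolic time it drops by at most `K` while the count grows by one. -/
theorem neg_mul_card_hyperbolicTimes_le_sum {K : ℝ} (hK : 0 ≤ K) (hb : ∀ i, -K ≤ b i)
    (n : ℕ) : -(K * #(hyperbolicTimes b n)) ≤ ∑ i ∈ range n, b i := by
  induction n using Nat.strong_induction_on with
  | _ n ih =>
  rcases n with _ | n
  · simp [hyperbolicTimes]
  by_cases ht : IsHyperbolicTime b (n + 1)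
  · have hnot : n + 1 ∉ hyperbolicTimes b n := by simp [mem_hyperbolicTimes]
    rw [hyperbolicTimes_succ ht, card_insert_of_notMem hnot, sum_range_succ]
    push_cast
    linarith [ih n n.lt_succ_self, hb n]
  · obtain ⟨s, hs, hlt⟩ : ∃ s < n + 1, ∑ i ∈ range s, b i < ∑ i ∈ range (n + 1), b i := by
      simpa [IsHyperbolicTime] using ht
    have hcard : (#(hyperbolicTimes b s) : ℝ) ≤ #(hyperbolicTimes b (n + 1)) := by
      exact_mod_cast card_le_card (hyperbolicTimes_mono hs.le)
    linarith [ih s hs, mul_le_mul_of_nonneg_left hcard hK]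

theorem sub_one_lt_card_erase_hyperbolicTimes {K x : ℝ} (hK : 0 < K) (hb : ∀ i, -K ≤ b i)
    {n : ℕ} (hn : ∑ i ∈ range n, b i < -x) : x / K - 1 < #((hyperbolicTimes b n).erase 1) := by
  have hpliss := neg_mul_card_hyperbolicTimes_le_sum hK.le hb n
  have herase : #(hyperbolicTimes b n) ≤ #((hyperbolicTimes b n).erase 1) + 1 := by
    have := pred_card_le_card_erase (s := hyperbolicTimes b n) (a := 1)
    omega
  have hx : x / K < #(hyperbolicTimes b n) := by
    rw [div_lt_iff₀ hK]
    linarith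
  have : (#(hyperbolicTimes b n) : ℝ) ≤ #((hyperbolicTimes b n).erase 1) + 1 := by
    exact_mod_cast herase
  linarith

end Pliss

theorem sum_Ico_le_of_isHyperbolicTime {a : ℕ → ℝ} {c : ℝ} {m t : ℕ}
    (ht : IsHyperbolicTime (fun i => a i + c) t) (hm : m < t) :
    ∑ i ∈ Ico m t, a i ≤ -c * (t - m) := by
  have := ht m hm
  rw [sum_Ico_eq_sub _ hm.le]
  simp only [sum_add_distrib, sum_const, card_range, nsmul_eq_mul] at this
  linarith

theorem prod_Ico_le_exp_of_isHyperbolicTime {p : ℕ → ℝ} (hp : ∀ i, 0 < p i) {c : ℝ} {m t : ℕ}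
    (ht : IsHyperbolicTime (fun i => Real.log (p i) + c) t) (hm : m < t) :
    ∏ i ∈ Ico m t, p i ≤ Real.exp (-c * (t - m)) := by
  calc ∏ i ∈ Ico m t, p i = Real.exp (∑ i ∈ Ico m t, Real.log (p i)) := by
        rw [Real.exp_sum]
        exact prod_congr rfl fun i _ => (Real.exp_log (hp i)).symm
    _ ≤ _ := Real.exp_le_exp.mpr (sum_Ico_le_of_isHyperbolicTime ht hm)

theorem eventually_sum_range_lt_of_limsup_lt {a : ℕ → ℝ} {A L : ℝ} (ha : ∀ i, a i ≤ A)
    (h : limsup (fun n : ℕ => (1 / (n : ℝ)) * ∑ i ∈ range n, a i) atTop < L) :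
    ∀ᶠ n : ℕ in atTop, ∑ i ∈ range n, a i < L * n := by
  have hbdd : ∀ᶠ n : ℕ in atTop, (1 / (n : ℝ)) * ∑ i ∈ range n, a i ≤ A := by
    filter_upwards [eventually_gt_atTop 0] with n hn
    have hn' : (0 : ℝ) < n := by exact_mod_cast hn
    have : ∑ i ∈ range n, a i ≤ n * A := by
      simpa using sum_le_card_nsmul (range n) a A fun i _ => ha i
    rw [one_div_mul_eq_div, div_le_iff₀ hn']
    linarith
  filter_upwards [eventually_lt_of_limsup_lt h (isBoundedUnder_of_eventually_le hbdd),
    eventually_gt_atTop 0] with n hn hpos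
  have hn' : (0 : ℝ) < n := by exact_mod_cast hpos
  rwa [one_div_mul_eq_div, div_lt_iff₀ hn'] at hn

theorem lt_of_eventually_sum_range_lt {a : ℕ → ℝ} {A c : ℝ} (ha : ∀ i, -A ≤ a i)
    (h : ∀ᶠ n : ℕ in atTop, ∑ i ∈ range n, a i < -c * n) : c < A := by
  obtain ⟨n, hn, hpos⟩ := (h.and (eventually_gt_atTop 0)).exists
  have : -A * n ≤ ∑ i ∈ range n, a i := by
    simpa [mul_comm] using card_nsmul_le_sum (range n) a (-A) fun i _ => ha i
  have hn' : (0 : ℝ) < n := by exact_mod_cast hpos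
  nlinarith

theorem hyperbolic_times_of_nonuniform_expansion_general
    (p : ℕ → ℝ) (hp : ∀ i, 0 < p i)
    (A₀ : ℝ) (hbd : ∀ i, |Real.log (p i)| ≤ A₀)
    (c₀ : ℝ) (hc₀ : 0 < c₀)
    (hnue : limsup (fun n : ℕ =>
      (1 / (n : ℝ)) * ∑ i ∈ Finset.range n, Real.log (p i)) atTop < -c₀) :
    ∃ N₀ : ℕ, ∀ N : ℕ, N ≥ N₀ →
      ∃ ℓ : ℕ, (ℓ : ℝ) > (c₀ / (4 * A₀ - c₀)) * N ∧
        ∃ n : Fin ℓ → ℕ, StrictMono n ∧ (∀ i, 1 < n i ∧ n i ≤ N) ∧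
          ∀ i : Fin ℓ, ∀ m : ℕ, m < n i →
            (∏ j ∈ Finset.Ico m (n i), p j) ≤
              Real.exp (-c₀ * ((n i : ℝ) - m) / 4) := by
  have hsum := eventually_sum_range_lt_of_limsup_lt (fun i => (abs_le.mp (hbd i)).2) hnue
  have hcA : c₀ < A₀ := lt_of_eventually_sum_range_lt (fun i => (abs_le.mp (hbd i)).1) hsum
  set ζ := c₀ / (4 * A₀ - c₀) with hζ
  have hζ_pos : 0 < ζ := div_pos hc₀ (by linarith)
  set b : ℕ → ℝ := fun i => Real.log (p i) + c₀ / 4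
  have hb : ∀ i, -(A₀ - c₀ / 4) ≤ b i := fun i => by
    dsimp only [b]
    linarith [(abs_le.mp (hbd i)).1]
  have hlarge : ∀ᶠ N : ℕ in atTop, 1 / (2 * ζ) ≤ N :=
    tendsto_natCast_atTop_atTop.eventually_ge_atTop _
  refine eventually_atTop.mp ((hsum.and hlarge).mono fun N ⟨hN, hNlarge⟩ => ?_)
  set T := (hyperbolicTimes b N).erase 1
  have hcount : 3 * c₀ / 4 * N / (A₀ - c₀ / 4) - 1 < #T := by
    refine sub_one_lt_card_erase_hyperbolicTimes (by linarith) hb ?_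
    simp only [b, sum_add_distrib, sum_const, card_range, nsmul_eq_mul]
    linarith
  have hratio : 3 * c₀ / 4 * N / (A₀ - c₀ / 4) = 3 * ζ * N := by
    rw [hζ]
    field_simp
  rw [div_le_iff₀ (by positivity)] at hNlarge
  refine ⟨#T, by linarith, T.orderEmbOfFin rfl, (T.orderEmbOfFin rfl).strictMono,
    fun i => ?_, fun i m hm => ?_⟩
  all_goals obtain ⟨hne, hi⟩ := mem_erase.mp (T.orderEmbOfFin_mem rfl i)
  all_goals obtain ⟨⟨h1, hle⟩, ht⟩ := mem_hyperbolicTimes.mp hi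
  · exact ⟨by omega, hle⟩
  · convert prod_Ico_le_exp_of_isHyperbolicTime hp ht hm using 2
    ring

/-- Hyperbolic times for the time-one Linear Poincaré flow under non-uniform sectional
expansion on average.  Here `p i` stands for `‖(P¹ | N^{cu}_{fⁱx})⁻¹‖`. -/
theorem hyperbolic_times_of_nonuniform_expansion
    (p : ℕ → ℝ) (hp : ∀ i, 0 < p i)
    (A₀ : ℝ) (hA₀ : 0 < A₀) (hbd : ∀ i, |Real.log (p i)| ≤ A₀)
    (c₀ : ℝ) (hc₀ : 0 < c₀)
    (hnue : limsup (fun n : ℕ =>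
      (1 / (n : ℝ)) * ∑ i ∈ Finset.range n, Real.log (p i)) atTop < -c₀) :
    ∃ N₀ : ℕ, ∀ N : ℕ, N ≥ N₀ →
      ∃ ℓ : ℕ, (ℓ : ℝ) > (c₀ / (4 * A₀ - c₀)) * N ∧
        ∃ n : Fin ℓ → ℕ, StrictMono n ∧ (∀ i, 1 < n i ∧ n i ≤ N) ∧
          ∀ i : Fin ℓ, ∀ m : ℕ, m < n i →
            (∏ j ∈ Finset.Ico m (n i), p j) ≤
              Real.exp (-c₀ * ((n i : ℝ) - m) / 4) :=
  hyperbolic_times_of_nonuniform_expansion_general p hp A₀ hbd c₀ hc₀ hnue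
end

section
/- Let J_i : D_i → ℝ (i = 0, …, n−1) be functions that are (L₁, ζ)-Hölder continuous, and suppose x, y are points with intrinsic distances dist(g_i(y), g_i(x)) ≤ ρ·e^{−(n−i)c/8} along each D_i, where g_i denotes i-fold composition of the maps. Then |∑_{i=0}^{n−1}(J_i(g_i y) − J_i(g_i x))| ≤ 2L₁ρ^ζ/(1 − e^{−ζc/8}). In particular, the ratio of products ∏_i e^{J_i(g_i y)} / ∏_i e^{J_i(g_i x)} lies in [C⁻¹, C] with C = exp(2L₁ρ^ζ/(1 − e^{−ζc/8})). -/
/-!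
Along a hyperbolic time the orbits `u i = g_i x` and `v i = g_i y` are at distance at most
`ρ θ^(n-i)` with `θ = e^{-c/8}`, so the Hölder bound makes the `i`-th distortion term at most
`L₁ ρ^ζ (θ^ζ)^(n-i)`. These terms form a geometric series with ratio `θ^ζ < 1`, whose sum is
bounded independently of `n`; exponentiating the sum gives the bound on the Jacobian ratio.
-/

open Set Finset Real

theorem sum_range_pow_sub_le {r : ℝ} (hr0 : 0 ≤ r) (hr1 : r < 1) (n : ℕ) :
    ∑ i ∈ range n, r ^ (n - i) ≤ r / (1 - r) :=
  calc ∑ i ∈ range n, r ^ (n - i)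
      = ∑ i ∈ Ico 1 (n + 1), r ^ i := by
        rw [sum_Ico_eq_sum_range, Nat.add_sub_cancel, ← sum_range_reflect]
        refine sum_congr rfl fun i hi => congrArg (r ^ ·) ?_
        have := mem_range.1 hi
        omega
    _ ≤ r ^ 1 / (1 - r) := geom_sum_Ico_le_of_lt_one hr0 hr1
    _ = r / (1 - r) := by rw [pow_one]

theorem abs_sum_sub_le_of_holder_of_dist_le_pow {X : Type*} [PseudoMetricSpace X]
    {L ζ ρ θ : ℝ} (hL : 0 ≤ L) (hζ : 0 ≤ ζ) (hρ : 0 ≤ ρ) (hθ : 0 ≤ θ) (hθζ : θ ^ ζ < 1)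
    {n : ℕ} {J : ℕ → X → ℝ} (hHolder : ∀ i < n, ∀ a b : X, |J i a - J i b| ≤ L * dist a b ^ ζ)
    {u v : ℕ → X} (hdist : ∀ i < n, dist (v i) (u i) ≤ ρ * θ ^ (n - i)) :
    |∑ i ∈ range n, (J i (v i) - J i (u i))| ≤ L * ρ ^ ζ * (θ ^ ζ / (1 - θ ^ ζ)) := by
  have hterm : ∀ i ∈ range n, |J i (v i) - J i (u i)| ≤ L * ρ ^ ζ * (θ ^ ζ) ^ (n - i) := by
    intro i hi
    have hi := mem_range.1 hi
    calc |J i (v i) - J i (u i)|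
        ≤ L * dist (v i) (u i) ^ ζ := hHolder i hi _ _
      _ ≤ L * (ρ * θ ^ (n - i)) ^ ζ := by gcongr; exact hdist i hi
      _ = L * ρ ^ ζ * (θ ^ ζ) ^ (n - i) := by
        rw [mul_rpow hρ (by positivity), rpow_pow_comm hθ, mul_assoc]
  calc |∑ i ∈ range n, (J i (v i) - J i (u i))|
      ≤ ∑ i ∈ range n, L * ρ ^ ζ * (θ ^ ζ) ^ (n - i) :=
        (abs_sum_le_sum_abs _ _).trans (sum_le_sum hterm)
    _ ≤ L * ρ ^ ζ * (θ ^ ζ / (1 - θ ^ ζ)) := by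
      rw [← mul_sum]
      gcongr
      exact sum_range_pow_sub_le (by positivity) hθζ n

theorem div_prod_exp_mem_Icc_of_abs_sum_sub_le {ι : Type*} {s : Finset ι} {a b : ι → ℝ} {C : ℝ}
    (h : |∑ i ∈ s, (a i - b i)| ≤ C) :
    (∏ i ∈ s, exp (a i)) / (∏ i ∈ s, exp (b i)) ∈ Icc (exp C)⁻¹ (exp C) := by
  rw [← exp_sum, ← exp_sum, ← exp_sub, ← sum_sub_distrib, ← exp_neg, Set.mem_Icc, exp_le_exp,
    exp_le_exp, ← abs_le]
  exact h

theorem bounded_distortion_at_hyperbolic_times_general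
    {X : Type*} [MetricSpace X]
    (L₁ ζ : ℝ) (hL₁ : 0 ≤ L₁) (hζ0 : 0 < ζ)
    (c : ℝ) (hc : 0 < c) (ρ : ℝ) (hρ : 0 ≤ ρ) (n : ℕ)
    (J : ℕ → X → ℝ)
    (hHolder : ∀ i, i < n → ∀ a b : X, |J i a - J i b| ≤ L₁ * dist a b ^ ζ)
    (u v : ℕ → X)
    (hdist : ∀ i, i < n → dist (v i) (u i) ≤ ρ * Real.exp (-((n : ℝ) - i) * c / 8)) :
    |∑ i ∈ Finset.range n, (J i (v i) - J i (u i))| ≤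
      2 * L₁ * ρ ^ ζ / (1 - Real.exp (-ζ * c / 8)) ∧
    (∏ i ∈ Finset.range n, Real.exp (J i (v i))) /
        (∏ i ∈ Finset.range n, Real.exp (J i (u i))) ∈
      Icc (Real.exp (2 * L₁ * ρ ^ ζ / (1 - Real.exp (-ζ * c / 8))))⁻¹
        (Real.exp (2 * L₁ * ρ ^ ζ / (1 - Real.exp (-ζ * c / 8)))) := by
  set θ := exp (-c / 8)
  have hθζ : θ ^ ζ = exp (-ζ * c / 8) := by rw [← exp_mul]; ring_nf
  have hr1 : exp (-ζ * c / 8) < 1 := exp_lt_one_iff.2 (by nlinarith)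
  have hdist_pow : ∀ i < n, dist (v i) (u i) ≤ ρ * θ ^ (n - i) := by
    intro i hi
    rw [← exp_nat_mul, Nat.cast_sub hi.le]
    convert hdist i hi using 3
    ring
  have hsum : |∑ i ∈ range n, (J i (v i) - J i (u i))| ≤
      2 * L₁ * ρ ^ ζ / (1 - exp (-ζ * c / 8)) := by
    refine (abs_sum_sub_le_of_holder_of_dist_le_pow hL₁ hζ0.le hρ (exp_pos _).le (hθζ ▸ hr1)
      hHolder hdist_pow).trans ?_
    rw [hθζ, mul_div_assoc']
    have hLρ : 0 ≤ L₁ * ρ ^ ζ := mul_nonneg hL₁ (rpow_nonneg hρ ζ)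
    exact div_le_div_of_nonneg_right (by nlinarith) (by linarith)
  exact ⟨hsum, div_prod_exp_mem_Icc_of_abs_sum_sub_le hsum⟩

/-- Bounded distortion at hyperbolic times: Hölder log-Jacobians along exponentially
contracted backward orbit segments have uniformly bounded distortion sums.  Here
`u i = g_i x` and `v i = g_i y` denote the orbits of `x` and `y` along the sections. -/
theorem bounded_distortion_at_hyperbolic_times
    {X : Type*} [MetricSpace X]
    (L₁ ζ : ℝ) (hL₁ : 0 ≤ L₁) (hζ0 : 0 < ζ) (hζ1 : ζ ≤ 1)
    (c : ℝ) (hc : 0 < c) (ρ : ℝ) (hρ : 0 ≤ ρ) (n : ℕ)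
    (J : ℕ → X → ℝ)
    (hHolder : ∀ i, i < n → ∀ a b : X, |J i a - J i b| ≤ L₁ * dist a b ^ ζ)
    (u v : ℕ → X)
    (hdist : ∀ i, i < n → dist (v i) (u i) ≤ ρ * Real.exp (-((n : ℝ) - i) * c / 8)) :
    |∑ i ∈ Finset.range n, (J i (v i) - J i (u i))| ≤
      2 * L₁ * ρ ^ ζ / (1 - Real.exp (-ζ * c / 8)) ∧
    (∏ i ∈ Finset.range n, Real.exp (J i (v i))) /
        (∏ i ∈ Finset.range n, Real.exp (J i (u i))) ∈
      Icc (Real.exp (2 * L₁ * ρ ^ ζ / (1 - Real.exp (-ζ * c / 8))))⁻¹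
        (Real.exp (2 * L₁ * ρ ^ ζ / (1 - Real.exp (-ζ * c / 8)))) :=
  bounded_distortion_at_hyperbolic_times_general L₁ ζ hL₁ hζ0 c hc ρ hρ n J hHolder u v hdist
end

section
/- Let f be a measurable map preserving an ergodic probability measure μ, and let P^T be a subadditive cocycle of invertible linear maps over the flow φ, i.e. the functions x ↦ log‖(P^{T}|N_x)^{-1}‖ are integrable and subadditive: log‖(P^{s+t}|N_x)^{-1}‖ ≤ log‖(P^{t}|N_{φ_s x})^{-1}‖ + log‖(P^{s}|N_x)^{-1}‖. If for μ-a.e. x, lim_{t→∞} (1/t)log‖(P^t|N_x)^{-1}‖ ≤ −c₀ < 0, then there exists T > 0 with ∫ (1/T)·log‖(P^T|N_x)^{-1}‖ dμ ≤ −c₀/2, and for μ-a.e. x the Birkhoff averages (1/n)∑_{i=0}^{n−1}(1/T)log‖(P^T|N_{φ_{iT}x})^{-1}‖ converge to a value ≤ −c₀/2. -/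
open MeasureTheory Filter Topology

/-!
Subadditivity along the time-one map gives `u n ≤ S n`, where `S n` are the Birkhoff sums of
`u 1`, so the defects `S n / n - u n / n` are nonnegative. By Birkhoff's theorem they converge
a.e. to `∫ u 1 - ℓ ≥ ∫ u 1 + c₀`, and Fatou's lemma produces a time `n` with
`∫ u n / n < -c₀ / 2`; this is the finite-time content of Kingman's theorem. Birkhoff's theorem
for the ergodic time-`n` map then gives the a.e. limit of the averages.

Birkhoff's pointwise theorem is derived from the maximal ergodic theorem: if `∫ g < 0`, the set
where the Birkhoff sums of `g` are unbounded above is invariant, hence null or conull, and it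
cannot be conull because the maximal theorem would then force `∫ g ≥ 0`.
-/

theorem MeasureTheory.MeasurePreserving.integral_comp_of_aestronglyMeasurable
    {α β G : Type*} [MeasurableSpace α] [MeasurableSpace β] [NormedAddCommGroup G]
    [NormedSpace ℝ G] {μ : Measure α} {ν : Measure β} {f : α → β}
    (hf : MeasurePreserving f μ ν) {g : β → G} (hg : AEStronglyMeasurable g ν) :
    ∫ x, g (f x) ∂μ = ∫ y, g y ∂ν := by
  rw [← hf.map_eq] at hg ⊢
  exact (integral_map hf.measurable.aemeasurable hg).symm

theorem nullMeasurableSet_bddAbove_range {α δ ι : Type*} [TopologicalSpace α]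
    [MeasurableSpace α] [BorelSpace α] [LinearOrder α] [OrderTopology α]
    [SecondCountableTopology α] [MeasurableSpace δ] {μ : Measure δ} [Countable ι]
    {f : ι → δ → α} (hf : ∀ i, AEMeasurable (f i) μ) :
    NullMeasurableSet {x | BddAbove (Set.range fun i ↦ f i x)} μ := by
  refine (measurableSet_bddAbove_range fun i ↦ (hf i).measurable_mk).nullMeasurableSet.congr ?_
  rw [eventuallyEq_set]
  filter_upwards [ae_all_iff.2 fun i ↦ (hf i).ae_eq_mk] with x hx
  simp only [hx]

theorem birkhoffSum_sub_const {α : Type*} (f : α → α) (g : α → ℝ) (a : ℝ) (n : ℕ) (x : α) :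
    birkhoffSum f (fun y ↦ g y - a) n x = birkhoffSum f g n x - n * a := by
  simp [birkhoffSum, Finset.sum_sub_distrib]

theorem bddAbove_range_birkhoffSum_apply_iff {α : Type*} (f : α → α) (g : α → ℝ) (x : α) :
    BddAbove (Set.range fun n ↦ birkhoffSum f g n (f x)) ↔
      BddAbove (Set.range fun n ↦ birkhoffSum f g n x) := by
  constructor
  · rintro ⟨C, hC⟩
    refine ⟨max 0 (g x + C), Set.forall_mem_range.2 fun n ↦ ?_⟩
    cases n with
    | zero => simp
    | succ n =>
      rw [birkhoffSum_succ']
      exact le_max_of_le_right (by linarith [hC (Set.mem_range_self n)])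
  · rintro ⟨C, hC⟩
    refine ⟨C - g x, Set.forall_mem_range.2 fun n ↦ ?_⟩
    have := hC (Set.mem_range_self (n + 1))
    rw [birkhoffSum_succ'] at this
    linarith

/-- `birkhoffMax f g n x = max (birkhoffSum f g 1 x) … (birkhoffSum f g (n + 1) x)`. -/
def birkhoffMax {α : Type*} (f : α → α) (g : α → ℝ) : ℕ → α → ℝ
  | 0 => g
  | n + 1 => fun x ↦ g x + max 0 (birkhoffMax f g n (f x))

section BirkhoffMax

variable {α : Type*} {f : α → α} {g : α → ℝ}

theorem birkhoffMax_le_succ (n : ℕ) (x : α) :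
    birkhoffMax f g n x ≤ birkhoffMax f g (n + 1) x := by
  induction n generalizing x with
  | zero => exact le_add_of_nonneg_right (le_max_left _ _)
  | succ n ih => exact add_le_add_right (max_le_max le_rfl (ih (f x))) _

theorem monotone_birkhoffMax (x : α) : Monotone fun n ↦ birkhoffMax f g n x :=
  monotone_nat_of_le_succ fun n ↦ birkhoffMax_le_succ n x

theorem le_birkhoffMax (n : ℕ) (x : α) : g x ≤ birkhoffMax f g n x :=
  monotone_birkhoffMax x (Nat.zero_le n)

theorem birkhoffSum_succ_le_birkhoffMax (n : ℕ) (x : α) :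
    birkhoffSum f g (n + 1) x ≤ birkhoffMax f g n x := by
  induction n generalizing x with
  | zero => simp [birkhoffMax]
  | succ n ih =>
    rw [birkhoffSum_succ']
    exact add_le_add_right ((ih (f x)).trans (le_max_right _ _)) _

end BirkhoffMax

section Birkhoff

variable {α : Type*} [MeasurableSpace α] {μ : Measure α} {f : α → α} {g : α → ℝ}

namespace MeasureTheory.MeasurePreserving

theorem integrable_birkhoffSum (hf : MeasurePreserving f μ μ) (hg : Integrable g μ) (n : ℕ) :
    Integrable (birkhoffSum f g n) μ :=
  integrable_finsetSum _ fun k _ ↦ (hf.iterate k).integrable_comp_of_integrable hg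

theorem integrable_birkhoffAverage (hf : MeasurePreserving f μ μ) (hg : Integrable g μ)
    (n : ℕ) : Integrable (birkhoffAverage ℝ f g n) μ :=
  (hf.integrable_birkhoffSum hg n).smul (n : ℝ)⁻¹

theorem integral_birkhoffAverage (hf : MeasurePreserving f μ μ) (hg : Integrable g μ) {n : ℕ}
    (hn : n ≠ 0) : ∫ x, birkhoffAverage ℝ f g n x ∂μ = ∫ x, g x ∂μ := by
  have hsum : ∫ x, birkhoffSum f g n x ∂μ = n * ∫ x, g x ∂μ := by
    simp only [birkhoffSum]
    rw [integral_finsetSum (f := fun k x ↦ g (f^[k] x)) _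
      fun k _ ↦ (hf.iterate k).integrable_comp_of_integrable hg]
    simp [(hf.iterate _).integral_comp_of_aestronglyMeasurable hg.aestronglyMeasurable]
  simp only [birkhoffAverage, smul_eq_mul, integral_const_mul, hsum]
  field_simp

theorem integrable_birkhoffMax (hf : MeasurePreserving f μ μ) (hg : Integrable g μ) (n : ℕ) :
    Integrable (birkhoffMax f g n) μ := by
  induction n with
  | zero => exact hg
  | succ n ih =>
    exact hg.add ((integrable_zero _ _ _).sup (hf.integrable_comp_of_integrable ih))

theorem integral_nonneg_of_ae_exists_birkhoffSum_pos
    (hf : MeasurePreserving f μ μ) (hg : Integrable g μ)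
    (hpos : ∀ᵐ x ∂μ, ∃ n, 0 < birkhoffSum f g n x) : 0 ≤ ∫ x, g x ∂μ := by
  set Φ := birkhoffMax f g
  have hΦ : ∀ n, Integrable (Φ n) μ := hf.integrable_birkhoffMax hg
  -- Integrating `Φ n ≤ g + (Φ n ∘ f)⁺` and using invariance of `μ` leaves the negative part.
  have hbound : ∀ n, ∫ x, min (Φ n x) 0 ∂μ ≤ ∫ x, g x ∂μ := by
    intro n
    have hΦpos : Integrable (fun x ↦ max 0 (Φ n x)) μ := (integrable_zero _ _ _).sup (hΦ n)
    have hΦpos_f : Integrable (fun x ↦ max 0 (Φ n (f x))) μ :=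
      hf.integrable_comp_of_integrable hΦpos
    calc ∫ x, min (Φ n x) 0 ∂μ = ∫ x, Φ n x - max 0 (Φ n x) ∂μ := by
          congr 1 with x
          rcases le_total (Φ n x) 0 with h | h <;> simp [h]
      _ = ∫ x, Φ n x - max 0 (Φ n (f x)) ∂μ := by
          rw [integral_sub (hΦ n) hΦpos, integral_sub (hΦ n) hΦpos_f,
            hf.integral_comp_of_aestronglyMeasurable hΦpos.aestronglyMeasurable]
      _ ≤ ∫ x, g x ∂μ :=
          integral_mono ((hΦ n).sub hΦpos_f) hg fun x ↦
            sub_le_iff_le_add.2 (birkhoffMax_le_succ n x)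
  -- The negative part is dominated by `|g|` and vanishes eventually at a.e. point.
  have hzero : ∀ᵐ x ∂μ, Tendsto (fun n ↦ min (Φ n x) 0) atTop (𝓝 0) := by
    filter_upwards [hpos] with x ⟨m, hm⟩
    obtain ⟨k, rfl⟩ : ∃ k, m = k + 1 :=
      Nat.exists_eq_succ_of_ne_zero (by rintro rfl; simp at hm)
    refine tendsto_const_nhds.congr' ((eventually_ge_atTop k).mono fun n hn ↦ ?_)
    have : 0 < Φ n x :=
      (hm.trans_le (birkhoffSum_succ_le_birkhoffMax k x)).trans_le (monotone_birkhoffMax x hn)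
    exact (min_eq_right this.le).symm
  have hlim : Tendsto (fun n ↦ ∫ x, min (Φ n x) 0 ∂μ) atTop (𝓝 0) := by
    simpa using tendsto_integral_of_dominated_convergence (F := fun n x ↦ min (Φ n x) 0) (f := 0)
      (fun x ↦ |g x|) (fun n ↦ ((hΦ n).inf (integrable_zero _ _ _)).aestronglyMeasurable)
      hg.abs (fun n ↦ ae_of_all _ fun x ↦ abs_le.2
        ⟨le_min ((neg_abs_le _).trans (le_birkhoffMax n x)) (neg_nonpos.2 (abs_nonneg _)),
          (min_le_right _ _).trans (abs_nonneg _)⟩) hzero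
  exact le_of_tendsto' hlim hbound

end MeasureTheory.MeasurePreserving

namespace Ergodic

theorem ae_bddAbove_range_birkhoffSum (hf : Ergodic f μ) (hg : Integrable g μ)
    (hneg : ∫ x, g x ∂μ < 0) : ∀ᵐ x ∂μ, BddAbove (Set.range fun n ↦ birkhoffSum f g n x) := by
  have hinv : f ⁻¹' {x | BddAbove (Set.range fun n ↦ birkhoffSum f g n x)} =
      {x | BddAbove (Set.range fun n ↦ birkhoffSum f g n x)} :=
    Set.ext fun x ↦ bddAbove_range_birkhoffSum_apply_iff f g x
  refine (hf.quasiErgodic.ae_mem_or_ae_notMem₀ (nullMeasurableSet_bddAbove_range fun n ↦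
    (hf.integrable_birkhoffSum hg n).aemeasurable) hinv.eventuallyEq).resolve_right fun hunbdd ↦ ?_
  refine hneg.not_ge (hf.integral_nonneg_of_ae_exists_birkhoffSum_pos hg ?_)
  filter_upwards [hunbdd] with x hx
  by_contra! h
  exact hx ⟨0, Set.forall_mem_range.2 h⟩

theorem ae_eventually_birkhoffAverage_lt [IsProbabilityMeasure μ] (hf : Ergodic f μ)
    (hg : Integrable g μ) {a : ℝ} (ha : ∫ x, g x ∂μ < a) :
    ∀ᵐ x ∂μ, ∀ᶠ n in atTop, birkhoffAverage ℝ f g n x < a := by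
  obtain ⟨b, hgb, hba⟩ := exists_between ha
  have hgb_int : Integrable (fun x ↦ g x - b) μ := hg.sub (integrable_const b)
  have hgb_neg : ∫ x, g x - b ∂μ < 0 := by
    rw [integral_sub hg (integrable_const b)]
    simp only [integral_const, probReal_univ, one_smul]
    linarith
  filter_upwards [hf.ae_bddAbove_range_birkhoffSum hgb_int hgb_neg] with x ⟨C, hC⟩
  have hsmall : ∀ᶠ n : ℕ in atTop, C / n < a - b :=
    (tendsto_const_div_atTop_nhds_zero_nat C).eventually (gt_mem_nhds (by linarith))
  filter_upwards [hsmall, eventually_gt_atTop 0] with n hn hn0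
  have hn_pos : (0 : ℝ) < n := Nat.cast_pos.2 hn0
  have hS : birkhoffSum f g n x - n * b ≤ C := by
    rw [← birkhoffSum_sub_const]
    exact hC (Set.mem_range_self n)
  calc birkhoffAverage ℝ f g n x = b + (birkhoffSum f g n x - n * b) / n := by
        simp only [birkhoffAverage, smul_eq_mul]
        field_simp
        ring
    _ ≤ b + C / n := by gcongr
    _ < a := by linarith

theorem ae_tendsto_birkhoffAverage [IsProbabilityMeasure μ] (hf : Ergodic f μ)
    (hg : Integrable g μ) :
    ∀ᵐ x ∂μ, Tendsto (fun n ↦ birkhoffAverage ℝ f g n x) atTop (𝓝 (∫ x, g x ∂μ)) := by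
  set I := ∫ x, g x ∂μ
  have hupper : ∀ᵐ x ∂μ, ∀ q : {q : ℚ // I < q}, ∀ᶠ n in atTop,
      birkhoffAverage ℝ f g n x < q :=
    ae_all_iff.2 fun q ↦ hf.ae_eventually_birkhoffAverage_lt hg q.2
  have hlower : ∀ᵐ x ∂μ, ∀ q : {q : ℚ // q < I}, ∀ᶠ n in atTop,
      (q : ℝ) < birkhoffAverage ℝ f g n x := by
    refine ae_all_iff.2 fun q ↦ ?_
    have := hf.ae_eventually_birkhoffAverage_lt hg.neg (a := -q)
      (by simpa [I, integral_neg] using q.2)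
    simpa [birkhoffAverage_neg, neg_lt] using this
  filter_upwards [hupper, hlower] with x hu hl
  refine tendsto_order.2 ⟨fun a ha ↦ ?_, fun a ha ↦ ?_⟩
  · obtain ⟨q, haq, hqI⟩ := exists_rat_btwn ha
    exact (hl ⟨q, hqI⟩).mono fun n hn ↦ haq.trans hn
  · obtain ⟨q, hIq, hqa⟩ := exists_rat_btwn ha
    exact (hu ⟨q, hIq⟩).mono fun n hn ↦ hn.trans hqa

end Ergodic

end Birkhoff

theorem MeasureTheory.exists_lt_integral_of_ae_tendsto_of_nonneg {α : Type*}
    [MeasurableSpace α] {μ : Measure α} [IsProbabilityMeasure μ] {w : ℕ → α → ℝ}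
    (hw : ∀ n x, 0 ≤ w n x) (hwi : ∀ n, Integrable (w n) μ) {b b' : ℝ}
    (hlim : ∀ᵐ x ∂μ, ∃ L, b ≤ L ∧ Tendsto (fun n ↦ w n x) atTop (𝓝 L)) (hb : b' < b) :
    ∃ n, b' < ∫ x, w n x ∂μ := by
  rcases lt_or_ge b' 0 with hb' | hb'
  · exact ⟨0, hb'.trans_le (integral_nonneg (hw 0))⟩
  have hliminf : ∀ᵐ x ∂μ, ENNReal.ofReal b ≤ liminf (fun n ↦ ENNReal.ofReal (w n x)) atTop := by
    filter_upwards [hlim] with x ⟨L, hbL, hL⟩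
    have : Tendsto (fun n ↦ ENNReal.ofReal (w n x)) atTop (𝓝 (ENNReal.ofReal L)) :=
      (ENNReal.continuous_ofReal.tendsto L).comp hL
    rw [this.liminf_eq]
    exact ENNReal.ofReal_le_ofReal hbL
  have hfatou : ENNReal.ofReal b ≤ liminf (fun n ↦ ENNReal.ofReal (∫ x, w n x ∂μ)) atTop := by
    calc ENNReal.ofReal b ≤ ∫⁻ x, liminf (fun n ↦ ENNReal.ofReal (w n x)) atTop ∂μ := by
          simpa using lintegral_mono_ae hliminf
      _ ≤ liminf (fun n ↦ ∫⁻ x, ENNReal.ofReal (w n x) ∂μ) atTop :=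
          lintegral_liminf_le' fun n ↦ (hwi n).aemeasurable.ennreal_ofReal
      _ = liminf (fun n ↦ ENNReal.ofReal (∫ x, w n x ∂μ)) atTop := by
          simp_rw [ofReal_integral_eq_lintegral_ofReal (hwi _) (ae_of_all _ (hw _))]
  obtain ⟨n, hn⟩ := (eventually_lt_of_lt_liminf
    (((ENNReal.ofReal_lt_ofReal_iff (hb'.trans_lt hb)).2 hb).trans_le hfatou)).exists
  exact ⟨n, (ENNReal.ofReal_lt_ofReal_iff'.1 hn).1⟩

theorem le_birkhoffSum_of_subadditive {α : Type*} {f : α → α} {v : ℕ → α → ℝ}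
    (hsub : ∀ m x, v (m + 1) x ≤ v 1 (f^[m] x) + v m x) (n : ℕ) (x : α) :
    v (n + 1) x ≤ birkhoffSum f (v 1) (n + 1) x := by
  induction n with
  | zero => simp
  | succ n ih =>
    rw [birkhoffSum_succ]
    linarith [hsub (n + 1) x]

theorem Ergodic.exists_integral_div_lt_of_subadditive {α : Type*} [MeasurableSpace α]
    {μ : Measure α} [IsProbabilityMeasure μ] {f : α → α} (hf : Ergodic f μ) {v : ℕ → α → ℝ}
    (hsub : ∀ m x, v (m + 1) x ≤ v 1 (f^[m] x) + v m x)
    (hint : ∀ n, 0 < n → Integrable (v n) μ) {ℓ₀ b : ℝ}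
    (hlim : ∀ᵐ x ∂μ, ∃ ℓ ≤ ℓ₀, Tendsto (fun n : ℕ ↦ v n x / n) atTop (𝓝 ℓ)) (hb : ℓ₀ < b) :
    ∃ n : ℕ, 0 < n ∧ ∫ x, v n x / n ∂μ < b := by
  have hv1 := hint 1 one_pos
  set I := ∫ x, v 1 x ∂μ
  set w : ℕ → α → ℝ := fun n x ↦
    birkhoffAverage ℝ f (v 1) (n + 1) x - v (n + 1) x / (n + 1 : ℕ)
  have hw : ∀ n x, 0 ≤ w n x := fun n x ↦ by
    simp only [w, birkhoffAverage, smul_eq_mul, sub_nonneg, inv_mul_eq_div]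
    gcongr
    exact le_birkhoffSum_of_subadditive hsub n x
  have hwi : ∀ n, Integrable (w n) μ := fun n ↦
    (hf.integrable_birkhoffAverage hv1 (n + 1)).sub ((hint (n + 1) n.succ_pos).div_const _)
  have hwlim : ∀ᵐ x ∂μ, ∃ L, I - ℓ₀ ≤ L ∧ Tendsto (fun n ↦ w n x) atTop (𝓝 L) := by
    filter_upwards [hf.ae_tendsto_birkhoffAverage hv1, hlim] with x hx ⟨ℓ, hℓ, hvx⟩
    exact ⟨I - ℓ, by linarith,
      (hx.comp (tendsto_add_atTop_nat 1)).sub (hvx.comp (tendsto_add_atTop_nat 1))⟩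
  obtain ⟨n, hn⟩ := exists_lt_integral_of_ae_tendsto_of_nonneg hw hwi hwlim
    (sub_lt_sub_left hb I)
  refine ⟨n + 1, n.succ_pos, ?_⟩
  rw [integral_sub (hf.integrable_birkhoffAverage hv1 (n + 1))
    ((hint (n + 1) n.succ_pos).div_const _), hf.integral_birkhoffAverage hv1 n.succ_ne_zero] at hn
  linarith

theorem iterate_apply_eq_nsmul_of_flow {τ X : Type*} [AddMonoid τ] {φ : τ → X → X}
    (hφ0 : ∀ x, φ 0 x = x) (hflow : ∀ s t x, φ (s + t) x = φ t (φ s x))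
    (T : τ) (k : ℕ) (x : X) : (φ T)^[k] x = φ (k • T) x := by
  induction k with
  | zero => simp [hφ0]
  | succ k ih => rw [Function.iterate_succ_apply', ih, succ_nsmul, hflow]

theorem subadditive_cocycle_finite_time_rate_general
    {M : Type*} [MeasurableSpace M]
    (φ : ℝ → M → M)
    (hφ0 : ∀ x, φ 0 x = x) (hflow : ∀ s t x, φ (s + t) x = φ t (φ s x))
    (μ : Measure M) [IsProbabilityMeasure μ]
    (herg : ∀ t : ℝ, t ≠ 0 → Ergodic (φ t) μ)
    (u : ℝ → M → ℝ)
    (hint : ∀ T : ℝ, 0 < T → Integrable (u T) μ)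
    (hsub : ∀ (s t : ℝ), 0 ≤ s → 0 ≤ t → ∀ x, u (s + t) x ≤ u t (φ s x) + u s x)
    (c₀ : ℝ) (hc₀ : 0 < c₀)
    (hlim : ∀ᵐ x ∂μ, ∃ ℓ : ℝ, ℓ ≤ -c₀ ∧
      Tendsto (fun t : ℝ => u t x / t) atTop (𝓝 ℓ)) :
    ∃ T : ℝ, 0 < T ∧ (∫ x, (1 / T) * u T x ∂μ) ≤ -c₀ / 2 ∧
      ∀ᵐ x ∂μ, ∃ ℓ : ℝ, ℓ ≤ -c₀ / 2 ∧
        Tendsto (fun n : ℕ =>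
            (1 / (n : ℝ)) * ∑ i ∈ Finset.range n, (1 / T) * u T (φ (i * T) x)) atTop
          (𝓝 ℓ) := by
  have hiter : ∀ (T : ℝ) (k : ℕ) x, (φ T)^[k] x = φ (k * T) x := fun T k x ↦ by
    rw [iterate_apply_eq_nsmul_of_flow hφ0 hflow, nsmul_eq_mul]
  obtain ⟨n, hn, hrate⟩ := (herg 1 one_ne_zero).exists_integral_div_lt_of_subadditive
    (v := fun n x ↦ u n x)
    (fun m x ↦ by simpa [hiter] using hsub m 1 m.cast_nonneg zero_le_one x)
    (fun n hn ↦ hint n (Nat.cast_pos.2 hn))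
    (hlim.mono fun x ⟨ℓ, hℓ, h⟩ ↦ ⟨ℓ, hℓ, h.comp tendsto_natCast_atTop_atTop⟩)
    (by linarith : -c₀ < -c₀ / 2)
  have hT : (0 : ℝ) < n := Nat.cast_pos.2 hn
  have hrate_T : ∫ x, (1 / (n : ℝ)) * u n x ∂μ ≤ -c₀ / 2 := by
    simpa only [one_div_mul_eq_div] using hrate.le
  refine ⟨n, hT, hrate_T, ?_⟩
  filter_upwards [(herg n hT.ne').ae_tendsto_birkhoffAverage
    ((hint n hT).const_mul (1 / (n : ℝ)))] with x hx
  refine ⟨_, hrate_T, hx.congr fun k ↦ ?_⟩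
  simp [birkhoffAverage, birkhoffSum, hiter]

/-- Kingman step in Corollary D: if the subadditive cocycle
`u T x = log‖(P^T|N_x)⁻¹‖` has a.e. asymptotic rate `≤ -c₀ < 0`, then some finite time
`T` achieves rate `≤ -c₀/2` on average, and the Birkhoff averages of the time-`T`
observable converge a.e. to a value `≤ -c₀/2`. -/
theorem subadditive_cocycle_finite_time_rate
    {M : Type*} [MeasurableSpace M]
    (φ : ℝ → M → M) (hφmeas : ∀ t, Measurable (φ t))
    (hφ0 : ∀ x, φ 0 x = x) (hflow : ∀ s t x, φ (s + t) x = φ t (φ s x))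
    (μ : Measure M) [IsProbabilityMeasure μ]
    (hinv : ∀ t : ℝ, MeasurePreserving (φ t) μ μ)
    (herg : ∀ t : ℝ, t ≠ 0 → Ergodic (φ t) μ)
    (u : ℝ → M → ℝ)
    (hint : ∀ T : ℝ, 0 < T → Integrable (u T) μ)
    (hsub : ∀ (s t : ℝ), 0 ≤ s → 0 ≤ t → ∀ x, u (s + t) x ≤ u t (φ s x) + u s x)
    (c₀ : ℝ) (hc₀ : 0 < c₀)
    (hlim : ∀ᵐ x ∂μ, ∃ ℓ : ℝ, ℓ ≤ -c₀ ∧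
      Tendsto (fun t : ℝ => u t x / t) atTop (𝓝 ℓ)) :
    ∃ T : ℝ, 0 < T ∧ (∫ x, (1 / T) * u T x ∂μ) ≤ -c₀ / 2 ∧
      ∀ᵐ x ∂μ, ∃ ℓ : ℝ, ℓ ≤ -c₀ / 2 ∧
        Tendsto (fun n : ℕ =>
            (1 / (n : ℝ)) * ∑ i ∈ Finset.range n, (1 / T) * u T (φ (i * T) x)) atTop
          (𝓝 ℓ) :=
  subadditive_cocycle_finite_time_rate_general φ hφ0 hflow μ herg u hint hsub c₀ hc₀ hlim
end
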